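/- Let f : (L,G) → (K,H) be a strong map between generator enriched lattices (a join-preserving map with f(G) ⊆ H ∪ {0̂_K}). Then the induced map F : M(L,G) → M(K,H) defined by F(⟨I|z⟩) = ⟨f(I)|f(z)⟩ (and F(∅) = ∅) is order-preserving on minor posets. -/

import Mathlib

open Finset

/-- A generator-enriched lattice datum inside an ambient lattice `L`:
a minimal element `z` together with a finite generating set of elements
strictly above `z`. The underlying set of elements consists of all joins
of `z` with subsets of the generating set. -/
structure GEL (L : Type*) [Lattice L] [DecidableEq L] where
  z : L
  gens : Finset L
  lt_gens : ∀ g ∈ gens, z < g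

namespace GEL

variable {L K : Type*} [Lattice L] [OrderBot L] [DecidableEq L]

/-- The underlying set of elements of a generator enriched lattice. -/
def carrier (M : GEL L) : Finset L :=
  M.gens.powerset.image fun X => X.sup id ⊔ M.z

/-- Deletion of a set of generators. -/
def delete (M : GEL L) (I : Finset L) : GEL L :=
  ⟨M.z, M.gens \ I, fun g hg => M.lt_gens g (Finset.mem_sdiff.mp hg).1⟩

/-- Restriction to a set of generators. -/
def restrict (M : GEL L) (I : Finset L) : GEL L :=
  M.delete (M.gens \ I)

/-- Contraction by a set of generators. -/
def contract (M : GEL L) (I : Finset L) : GEL L :=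
  ⟨I.sup id ⊔ M.z,
   (M.gens.image fun g => g ⊔ (I.sup id ⊔ M.z)).erase (I.sup id ⊔ M.z),
   fun g hg => by
     obtain ⟨hne, hg'⟩ := Finset.mem_erase.mp hg
     obtain ⟨h, -, rfl⟩ := Finset.mem_image.mp hg'
     exact lt_of_le_of_ne le_sup_right (Ne.symm hne)⟩

open Classical in
/-- Contraction by an element: contract by all generators below it. -/
noncomputable def contractEl (M : GEL L) (ℓ : L) : GEL L :=
  M.contract (M.gens.filter fun g => g ≤ ℓ)

/-- A single deletion or contraction step. -/
def Step (M N : GEL L) : Prop :=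
  ∃ I ⊆ M.gens, N = M.delete I ∨ N = M.contract I

/-- `Minor M N` : `N` is a minor of `M`, i.e. obtained from `M` by a finite
sequence of deletions and contractions. -/
def Minor (M N : GEL L) : Prop :=
  Relation.ReflTransGen Step M N

/-- The generator enriched lattice on a lattice with `⊥`, with the given generating set. -/
def ofGens (G : Finset L) (hG : ∀ g ∈ G, (⊥ : L) < g) : GEL L :=
  ⟨⊥, G, hG⟩

/-- The underlying type of the minor poset of `T`: all minors of `T`
together with an adjoined minimum `none`. -/
abbrev MP (T : GEL L) := Option {M : GEL L // T.Minor M}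

/-- The order relation of the minor poset. -/
def mple (T : GEL L) : MP T → MP T → Prop
  | none, _ => True
  | some _, none => False
  | some A, some B => B.1.Minor A.1

/-- The rank function of the minor poset. -/
def mrank (T : GEL L) : MP T → ℕ
  | none => 0
  | some A => A.1.gens.card + 1

/-- A parallel: an element `ℓ` and distinct generators `g, h` with
`g ⊔ ℓ = h ⊔ ℓ ≠ ℓ`. -/
def HasParallel (M : GEL L) : Prop :=
  ∃ ℓ ∈ M.carrier, ∃ g ∈ M.gens, ∃ h ∈ M.gens,
    g ≠ h ∧ g ⊔ ℓ = h ⊔ ℓ ∧ g ⊔ ℓ ≠ ℓ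

/-- Isomorphism of generator enriched lattices: a join-preserving bijection of the
underlying sets carrying the generating set onto the generating set. -/
def GIso [Lattice K] [OrderBot K] [DecidableEq K] (M : GEL L) (N : GEL K) : Prop :=
  ∃ f : L → K, Set.BijOn f ↑M.carrier ↑N.carrier ∧
    (∀ a ∈ M.carrier, ∀ b ∈ M.carrier, f (a ⊔ b) = f a ⊔ f b) ∧
    f '' ↑M.gens = ↑N.gens

open Classical in
/-- The image generator enriched lattice `⟨f(I) | f(z)⟩` of a strong map. -/
noncomputable def map [Lattice K] [DecidableEq K] (f : L → K) (M : GEL L) : GEL K :=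
  ⟨f M.z, (M.gens.image f).filter fun y => f M.z < y,
   fun g hg => (Finset.mem_filter.mp hg).2⟩

/-- `T` lifts join irreducibles: for every `ℓ` and generator `g` with `g ≰ ℓ`,
the element `g ⊔ ℓ` is join irreducible in the interval `[ℓ, ⊤]`. -/
def LiftsJI (T : GEL L) : Prop :=
  ∀ ℓ : L, ∀ g ∈ T.gens, ¬ g ≤ ℓ →
    ∀ a b : L, ℓ ≤ a → ℓ ≤ b → g ⊔ ℓ = a ⊔ b → g ⊔ ℓ = a ∨ g ⊔ ℓ = b

end GEL

/-!
A join-preserving map is monotone, and it commutes with deletion and contraction: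
deleting generators of `M` only deletes generators of `F(M)`, and contracting `I ⊆ M.gens`
becomes contracting `F(M|I)`, because `f (⋁ I ⊔ z) = ⋁ f(I) ⊔ f z` and the images of
generators collapsing onto `f z` contribute nothing to this join. So `F` maps minor steps to
minor steps. The base case is that `F⟨G | ⊥⟩ = ⟨f(G) \ {⊥} | ⊥⟩` is a restriction of
`⟨H | ⊥⟩`, as `f(G) ⊆ H ∪ {⊥}` and `f ⊥ = ⊥`.
-/

theorem Finset.sup_filter_lt_sup {α : Type*} [SemilatticeSup α] [OrderBot α]
    {s : Finset α} {c : α} [DecidablePred (c < ·)] (hs : ∀ y ∈ s, c ≤ y) :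
    (s.filter (c < ·)).sup id ⊔ c = s.sup id ⊔ c := by
  refine le_antisymm (sup_le_sup_right (sup_mono (filter_subset _ _)) c) ?_
  refine sup_le (Finset.sup_le fun y hy => ?_) le_sup_right
  rcases (hs y hy).lt_or_eq with hlt | rfl
  · exact le_sup_of_le_left (le_sup (f := id) (mem_filter.2 ⟨hy, hlt⟩))
  · exact le_sup_right

namespace GEL

section

variable {L : Type*} [Lattice L] [DecidableEq L]

theorem ext {M N : GEL L} (hz : M.z = N.z) (hgens : M.gens = N.gens) : M = N := by
  cases M; cases N; cases hz; cases hgens; rfl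

theorem restrict_gens_of_subset {M : GEL L} {I : Finset L} (hI : I ⊆ M.gens) :
    (M.restrict I).gens = I := by
  simp [restrict, delete, inter_eq_right.mpr hI]

theorem eq_restrict_of_subset {M N : GEL L} (hz : N.z = M.z) (hgens : N.gens ⊆ M.gens) :
    N = M.restrict N.gens :=
  ext hz (restrict_gens_of_subset hgens).symm

variable [OrderBot L]

theorem mem_contract_gens {M : GEL L} {I : Finset L} {x : L} :
    x ∈ (M.contract I).gens ↔
      x ≠ I.sup id ⊔ M.z ∧ ∃ g ∈ M.gens, g ⊔ (I.sup id ⊔ M.z) = x := by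
  simp [contract]

theorem step_restrict (M : GEL L) (I : Finset L) : M.Step (M.restrict I) :=
  ⟨_, sdiff_subset, Or.inl rfl⟩

theorem step_of_subset {M N : GEL L} (hz : N.z = M.z) (hgens : N.gens ⊆ M.gens) :
    M.Step N :=
  eq_restrict_of_subset hz hgens ▸ step_restrict M N.gens

end

section map

variable {L K : Type*} [Lattice L] [DecidableEq L] [Lattice K] [DecidableEq K]
  (f : SupHom L K)

theorem mem_map_gens {M : GEL L} {y : K} :
    y ∈ (M.map f).gens ↔ f M.z < y ∧ ∃ g ∈ M.gens, f g = y := by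
  simp [map, and_comm]

theorem map_gens_mono {M N : GEL L} (hz : N.z = M.z) (hgens : N.gens ⊆ M.gens) :
    (N.map f).gens ⊆ (M.map f).gens := by
  intro y hy
  obtain ⟨hlt, g, hg, rfl⟩ := (mem_map_gens f).1 hy
  exact (mem_map_gens f).2 ⟨hz ▸ hlt, g, hgens hg, rfl⟩

open Classical in
theorem map_restrict_gens {M : GEL L} {I : Finset L} (hI : I ⊆ M.gens) :
    ((M.restrict I).map f).gens = (I.image f).filter (f M.z < ·) := by
  simp [map, restrict, delete, inter_eq_right.mpr hI]

omit [DecidableEq K] in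
theorem apply_z_le_of_mem_gens (M : GEL L) {g : L} (hg : g ∈ M.gens) : f M.z ≤ f g :=
  OrderHomClass.mono f (M.lt_gens g hg).le

variable [OrderBot L] [OrderBot K]

theorem map_finset_sup_sup (s : Finset L) (a : L) :
    f (s.sup id ⊔ a) = (s.image f).sup id ⊔ f a := by
  induction s using Finset.induction_on with
  | empty => simp
  | insert b s _ ih =>
    rw [sup_insert, image_insert, sup_insert, id, id, sup_assoc, map_sup, ih, sup_assoc]

theorem map_contract_z {M : GEL L} {I : Finset L} (hI : I ⊆ M.gens) :
    f (I.sup id ⊔ M.z) = ((M.restrict I).map f).gens.sup id ⊔ f M.z := by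
  classical
  rw [map_finset_sup_sup, map_restrict_gens f hI]
  refine (sup_filter_lt_sup ?_).symm
  simp only [mem_image, forall_exists_index, and_imp, forall_apply_eq_imp_iff₂]
  exact fun g hg => apply_z_le_of_mem_gens f M (hI hg)

omit [OrderBot L] in
theorem step_map_delete (M : GEL L) (I : Finset L) : (M.map f).Step ((M.delete I).map f) :=
  step_of_subset rfl (map_gens_mono f rfl sdiff_subset)

theorem map_contract {M : GEL L} {I : Finset L} (hI : I ⊆ M.gens) :
    (M.contract I).map f = (M.map f).contract ((M.restrict I).map f).gens := by
  set w := I.sup id ⊔ M.z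
  have hw : f w = ((M.restrict I).map f).gens.sup id ⊔ (M.map f).z := map_contract_z f hI
  refine ext hw ?_
  ext x
  show x ∈ ((M.contract I).map f).gens ↔ x ∈ ((M.map f).contract _).gens
  rw [mem_map_gens, mem_contract_gens, ← hw]
  simp only [mem_contract_gens, mem_map_gens]
  constructor
  · rintro ⟨hlt, _, ⟨-, g, hg, rfl⟩, rfl⟩
    rw [map_sup] at hlt ⊢
    refine ⟨hlt.ne', f g, ⟨?_, g, hg, rfl⟩, rfl⟩
    -- if `f g = f M.z` then `f g ≤ f w`, so `g` disappears in the contraction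
    refine (apply_z_le_of_mem_gens f M hg).lt_of_ne fun heq => hlt.ne' ?_
    exact sup_eq_right.2 (heq ▸ OrderHomClass.mono f le_sup_right)
  · rintro ⟨hne, _, ⟨-, g, hg, rfl⟩, rfl⟩
    have hgw : f (g ⊔ w) ≠ f w := by rwa [map_sup]
    refine ⟨?_, g ⊔ w, ⟨fun h => hgw (congrArg f h), g, hg, rfl⟩, map_sup f g w⟩
    rw [← map_sup]
    exact (OrderHomClass.mono f le_sup_right).lt_of_ne hgw.symm

theorem Step.map {M N : GEL L} (h : M.Step N) : (M.map f).Step (N.map f) := by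
  obtain ⟨I, hI, rfl | rfl⟩ := h
  · exact step_map_delete f M I
  · rw [map_contract f hI]
    have hJ : (M.restrict I).gens ⊆ M.gens := (restrict_gens_of_subset hI).trans_subset hI
    exact ⟨_, map_gens_mono f (N := M.restrict I) rfl hJ, Or.inr rfl⟩

theorem Minor.map {M N : GEL L} (h : M.Minor N) : (M.map f).Minor (N.map f) :=
  Relation.ReflTransGen.lift (GEL.map f) (fun _ _ => Step.map f) M N h

end map

end GEL

/-- A strong map `f : (L,G) → (K,H)` (join-preserving with `f(G) ⊆ H ∪ {⊥}`)
induces an order-preserving map of minor posets `F(⟨I|z⟩) = ⟨f(I)|f(z)⟩`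
(and `F(∅) = ∅`): it carries minors of `(L,G)` to minors of `(K,H)` and
preserves the minor relation. -/
theorem strong_map_induces_orderPreserving {L K : Type*}
    [Lattice L] [OrderBot L] [DecidableEq L]
    [Lattice K] [OrderBot K] [DecidableEq K]
    (G : Finset L) (hG : ∀ g ∈ G, (⊥ : L) < g)
    (H : Finset K) (hH : ∀ h ∈ H, (⊥ : K) < h)
    (f : L → K) (hjoin : ∀ a b : L, f (a ⊔ b) = f a ⊔ f b) (hbot : f ⊥ = ⊥)
    (hstrong : ∀ g ∈ G, f g ∈ H ∨ f g = ⊥) :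
    (∀ M : GEL L, (GEL.ofGens G hG).Minor M →
      (GEL.ofGens H hH).Minor (GEL.map f M)) ∧
    (∀ M₁ M₂ : GEL L, (GEL.ofGens G hG).Minor M₂ → M₂.Minor M₁ →
      (GEL.map f M₂ : GEL K).Minor (GEL.map f M₁)) := by
  let F : SupHom L K := ⟨f, hjoin⟩
  have himage : ((GEL.ofGens G hG).map F).gens ⊆ H := by
    intro y hy
    obtain ⟨hlt, g, hg, rfl⟩ := (GEL.mem_map_gens F).1 hy
    exact (hstrong g hg).resolve_right fun h => (hlt.trans_eq h).ne hbot
  have hbase : (GEL.ofGens H hH).Minor ((GEL.ofGens G hG).map F) :=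
    .single (GEL.step_of_subset hbot himage)
  exact ⟨fun M hM => hbase.trans (hM.map F), fun M₁ M₂ _ h => h.map F⟩
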